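/- arXiv:1305.3365 — 4 statements merged into one kernel-verified Lean document; each statement's English description precedes it below -/
import Mathlib

section
/- The operator B : F → F defined by (Bf)(x) = s_l · f(u_l⁻¹(x)) + λ_l(u_l⁻¹(x)) for x ∈ u_l(Ω) \ {b} (where l is the unique index with x ∈ [x_l, x_{l+1})), and (Bf)(b) = s_{N-1}·f(b) + λ_{N-1}(b), is a contraction mapping on (F, ‖·‖_∞) with contraction constant max_l |s_l| < 1. -/
/-- The affine map `u_l : [a,b] → [x_l, x_{l+1}]` with `u_l a = x_l`, `u_l b = x_{l+1}`. -/
noncomputable def uMap (a b : ℝ) (x : ℕ → ℝ) (l : ℕ) (t : ℝ) : ℝ :=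
  x l + ((x (l + 1) - x l) / (b - a)) * (t - a)

/-- The Read–Bajraktarević operator `B` defined by
`(Bf)(y) = s_l · f(u_l⁻¹ y) + λ_l(u_l⁻¹ y)` on each piece `[x_l, x_{l+1})`, and
`(Bf)(b) = s_{N-1} f(b) + λ_{N-1}(b)`, is a contraction on the space of bounded
functions on `[a,b]` with the sup norm, with contraction constant `max_l |s_l| < 1`. -/
theorem stmt1 (a b : ℝ) (hab : a < b) (N : ℕ) (hN : 2 ≤ N)
    (x : ℕ → ℝ) (hx0 : x 0 = a) (hxN : x N = b)
    (hxmono : ∀ l < N, x l < x (l + 1))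
    (v : ℕ → ℝ → ℝ) (hv : ∀ l < N, ∀ t : ℝ, v l (uMap a b x l t) = t)
    (s : ℕ → ℝ) (hs : ∀ l < N, |s l| < 1)
    (lam : ℕ → ℝ → ℝ) (hlam : ∀ l < N, ∃ C, ∀ t ∈ Set.Icc a b, |lam l t| ≤ C)
    (B : (ℝ → ℝ) → (ℝ → ℝ))
    (hB : ∀ f : ℝ → ℝ, ∀ l < N, ∀ y ∈ Set.Ico (x l) (x (l + 1)),
      B f y = s l * f (v l y) + lam l (v l y))
    (hBb : ∀ f : ℝ → ℝ, B f b = s (N - 1) * f b + lam (N - 1) b) :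
    (Finset.range N).sup' (Finset.nonempty_range_iff.mpr (by omega)) (fun l => |s l|) < 1 ∧
    ∀ f g : ℝ → ℝ, ∀ M : ℝ,
      (∀ t ∈ Set.Icc a b, |f t - g t| ≤ M) →
      ∀ y ∈ Set.Icc a b,
        |B f y - B g y| ≤
          (Finset.range N).sup' (Finset.nonempty_range_iff.mpr (by omega)) (fun l => |s l|) * M := by
  set K := (Finset.range N).sup' (Finset.nonempty_range_iff.mpr (by omega)) (fun l => |s l|)
    with hK
  have hKlt : K < 1 := by
    rw [hK, Finset.sup'_lt_iff]
    intro l hl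
    exact hs l (Finset.mem_range.mp hl)
  have hKge : ∀ l < N, |s l| ≤ K := by
    intro l hl
    exact Finset.le_sup' (fun l => |s l|) (Finset.mem_range.mpr hl)
  have hK0 : 0 ≤ K := le_trans (abs_nonneg _) (hKge 0 (by omega))
  refine ⟨hKlt, ?_⟩
  intro f g M hM y hy
  have hM0 : 0 ≤ M := le_trans (abs_nonneg _) (hM a ⟨le_refl a, le_of_lt hab⟩)
  -- key estimate given a piece
  have key : ∀ l < N, ∀ t ∈ Set.Icc a b,
      |(s l * f t + lam l t) - (s l * g t + lam l t)| ≤ K * M := by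
    intro l hl t ht
    have : (s l * f t + lam l t) - (s l * g t + lam l t) = s l * (f t - g t) := by ring
    rw [this, abs_mul]
    exact mul_le_mul (hKge l hl) (hM t ht) (abs_nonneg _) hK0
  rcases eq_or_lt_of_le hy.2 with hyb | hyb
  · -- y = b
    subst hyb
    rw [hBb f, hBb g]
    exact key (N - 1) (by omega) y ⟨hy.1, le_refl _⟩
  · -- y < b : find the piece
    have h0S : (0 : ℕ) ∈ (Finset.range (N + 1)).filter (fun k => x k ≤ y) := by
      simp [hx0, hy.1]
    set S := (Finset.range (N + 1)).filter (fun k => x k ≤ y) with hS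
    have hSne : S.Nonempty := ⟨0, h0S⟩
    set l := S.max' hSne with hl
    have hlmem : l < N + 1 ∧ x l ≤ y := by
      have h := Finset.mem_filter.mp (S.max'_mem hSne)
      exact ⟨Finset.mem_range.mp h.1, h.2⟩
    have hlN : l ≤ N := by omega
    have hxly : x l ≤ y := hlmem.2
    have hlneN : l ≠ N := by
      intro h
      rw [h, hxN] at hxly
      linarith
    have hlN' : l < N := lt_of_le_of_ne hlN hlneN
    have hyxl1 : y < x (l + 1) := by
      by_contra h
      push_neg at h
      have : l + 1 ∈ S :=
        Finset.mem_filter.mpr ⟨Finset.mem_range.mpr (by omega), h⟩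
      have := S.le_max' _ this
      omega
    -- the preimage point
    have hxl := hxmono l hlN'
    set t := a + (y - x l) * (b - a) / (x (l + 1) - x l) with ht
    have hba : b - a ≠ 0 := by linarith
    have hxx : x (l + 1) - x l ≠ 0 := by linarith
    have hut : uMap a b x l t = y := by
      rw [uMap, ht]
      field_simp
      ring
    have htmem : t ∈ Set.Icc a b := by
      constructor
      · rw [ht]
        have : 0 ≤ (y - x l) * (b - a) / (x (l + 1) - x l) :=
          div_nonneg (mul_nonneg (by linarith) (by linarith)) (by linarith)
        linarith
      · rw [ht]
        have h1 : (y - x l) * (b - a) / (x (l + 1) - x l) ≤ b - a := by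
          rw [div_le_iff₀ (by linarith)]
          nlinarith
        linarith
    have hvt : v l y = t := by
      rw [← hut, hv l hlN']
    rw [hB f l hlN' y ⟨hxly, hyxl1⟩, hB g l hlN' y ⟨hxly, hyxl1⟩, hvt]
    exact key l hlN' t htmem
end

section
/- If f⁽¹⁾ and f⁽²⁾ are the fractal functions (i.e., the unique fixed points of the operators B_{λ⁽¹⁾} and B_{λ⁽²⁾}) corresponding to λ⁽¹⁾ and λ⁽²⁾ respectively, then for any real numbers α₁, α₂, the function α₁f⁽¹⁾ + α₂f⁽²⁾ is the fractal function corresponding to α₁λ⁽¹⁾ + α₂λ⁽²⁾, i.e., the unique fixed point of B_{α₁λ⁽¹⁾ + α₂λ⁽²⁾}. -/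
/-- `f` is bounded on the set `Ω`. -/
def BddOn (f : ℝ → ℝ) (Ω : Set ℝ) : Prop := ∃ C, ∀ t ∈ Ω, |f t| ≤ C

/-- `f` satisfies the self-referential (fixed point of the Read–Bajraktarević operator)
equation `f(y) = s_l f(u_l⁻¹ y) + λ_l(u_l⁻¹ y)` on each piece `[x_l, x_{l+1})`
(`v l` denotes `u_l⁻¹`), together with `f(b) = s_{N-1} f(b) + λ_{N-1}(b)`. -/
def SelfRef (a b : ℝ) (N : ℕ) (x : ℕ → ℝ) (v : ℕ → ℝ → ℝ) (s : ℕ → ℝ)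
    (lam : ℕ → ℝ → ℝ) (f : ℝ → ℝ) : Prop :=
  (∀ l < N, ∀ y ∈ Set.Ico (x l) (x (l + 1)), f y = s l * f (v l y) + lam l (v l y)) ∧
  f b = s (N - 1) * f b + lam (N - 1) b

/-- If `f¹, f²` are the fractal functions corresponding to `λ¹, λ²`, then for any
reals `α₁, α₂` the function `α₁ f¹ + α₂ f²` is the fractal function corresponding
to `α₁ λ¹ + α₂ λ²` (i.e. the fixed point of the corresponding operator). -/
theorem stmt3 (a b : ℝ) (hab : a < b) (N : ℕ) (hN : 2 ≤ N)
    (x : ℕ → ℝ) (hx0 : x 0 = a) (hxN : x N = b)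
    (hxmono : ∀ l < N, x l < x (l + 1))
    (v : ℕ → ℝ → ℝ) (hv : ∀ l < N, ∀ t : ℝ, v l (uMap a b x l t) = t)
    (s : ℕ → ℝ) (hs : ∀ l < N, |s l| < 1)
    (lam1 lam2 : ℕ → ℝ → ℝ)
    (hlam1 : ∀ l < N, BddOn (lam1 l) (Set.Icc a b))
    (hlam2 : ∀ l < N, BddOn (lam2 l) (Set.Icc a b))
    (f1 f2 : ℝ → ℝ)
    (hf1 : BddOn f1 (Set.Icc a b) ∧ SelfRef a b N x v s lam1 f1)
    (hf2 : BddOn f2 (Set.Icc a b) ∧ SelfRef a b N x v s lam2 f2)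
    (α₁ α₂ : ℝ) :
    BddOn (fun t => α₁ * f1 t + α₂ * f2 t) (Set.Icc a b) ∧
    SelfRef a b N x v s (fun l t => α₁ * lam1 l t + α₂ * lam2 l t)
      (fun t => α₁ * f1 t + α₂ * f2 t) := by
  obtain ⟨⟨C1, hC1⟩, hS1, hb1⟩ := hf1
  obtain ⟨⟨C2, hC2⟩, hS2, hb2⟩ := hf2
  refine ⟨⟨|α₁| * C1 + |α₂| * C2, fun t ht => ?_⟩, fun l hl y hy => ?_, ?_⟩
  · calc |α₁ * f1 t + α₂ * f2 t| ≤ |α₁ * f1 t| + |α₂ * f2 t| := abs_add_le _ _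
      _ = |α₁| * |f1 t| + |α₂| * |f2 t| := by rw [abs_mul, abs_mul]
      _ ≤ |α₁| * C1 + |α₂| * C2 :=
          add_le_add (mul_le_mul_of_nonneg_left (hC1 t ht) (abs_nonneg _))
            (mul_le_mul_of_nonneg_left (hC2 t ht) (abs_nonneg _))
  · show α₁ * f1 y + α₂ * f2 y = _
    rw [hS1 l hl y hy, hS2 l hl y hy]; ring
  · show α₁ * f1 b + α₂ * f2 b = _
    conv_lhs => rw [hb1, hb2]
    ring
end

section
/- If the fractal function f_λ ∈ B is continuous on [a,b], then for each l = 0, …, N−2 the matching condition λ_l(b) − λ_{l+1}(a) = s_{l+1}·λ_0(a)/(1 − s_0) − s_l·λ_{N-1}(b)/(1 − s_{N-1}) holds. -/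
/-!
At an interior knot `x_{l+1}` the functional equation gives the value from the right,
`f(x_{l+1}) = s_{l+1} f(a) + λ_{l+1}(a)`, while continuity of `f` forces the left limit
`s_l f(b) + λ_l(b)` to be the same value. The endpoint values are fixed points of the affine
maps `y ↦ s_0 y + λ_0(a)` and `y ↦ s_{N-1} y + λ_{N-1}(b)`, i.e. `f(a) = λ_0(a)/(1 - s_0)` and
`f(b) = λ_{N-1}(b)/(1 - s_{N-1})`; equating the two expressions gives the matching condition.
-/

open Set

theorem eq_div_one_sub_of_eq_mul_add {s c y : ℝ} (hs : s ≠ 1) (h : y = s * y + c) :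
    y = c / (1 - s) := by
  rw [eq_div_iff (sub_ne_zero.2 hs.symm)]
  linarith

theorem knot_mem_Icc {a b : ℝ} {N : ℕ} {x : ℕ → ℝ} (hx0 : x 0 = a) (hxN : x N = b)
    (hx : ∀ l < N, x l < x (l + 1)) {l : ℕ} (hl : l ≤ N) : x l ∈ Icc a b := by
  have hmono := (strictMonoOn_Iic_of_lt_succ hx).monotoneOn
  subst hx0 hxN
  exact ⟨hmono (Nat.zero_le N) hl (Nat.zero_le l), hmono hl self_mem_Iic hl⟩

theorem uMap_left (a b : ℝ) (x : ℕ → ℝ) (l : ℕ) : uMap a b x l a = x l := by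
  simp [uMap]

theorem continuous_uMap (a b : ℝ) (x : ℕ → ℝ) (l : ℕ) : Continuous (uMap a b x l) := by
  unfold uMap
  fun_prop

section uMap

variable {a b : ℝ} {x : ℕ → ℝ} {l : ℕ}

theorem uMap_right (hab : a ≠ b) : uMap a b x l b = x (l + 1) := by
  rw [uMap, div_mul_cancel₀ _ (sub_ne_zero.2 hab.symm)]
  ring

theorem strictMono_uMap (hab : a < b) (hx : x l < x (l + 1)) : StrictMono (uMap a b x l) := by
  have hslope : 0 < (x (l + 1) - x l) / (b - a) := div_pos (sub_pos.2 hx) (sub_pos.2 hab)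
  intro t t' htt'
  simp only [uMap]
  gcongr

theorem mapsTo_uMap_Ico (hab : a < b) (hx : x l < x (l + 1)) :
    MapsTo (uMap a b x l) (Ico a b) (Ico (x l) (x (l + 1))) := by
  simpa only [uMap_left, uMap_right hab.ne] using
    (strictMono_uMap hab hx).mapsTo_Ico (a := a) (b := b)

theorem mapsTo_uMap_Icc (hab : a < b) (hx : x l < x (l + 1)) :
    MapsTo (uMap a b x l) (Icc a b) (Icc (x l) (x (l + 1))) := by
  simpa only [uMap_left, uMap_right hab.ne] using
    (strictMono_uMap hab hx).monotone.mapsTo_Icc (a := a) (b := b)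

end uMap

namespace SelfRef

variable {a b : ℝ} {N : ℕ} {x : ℕ → ℝ} {v : ℕ → ℝ → ℝ} {s : ℕ → ℝ} {lam : ℕ → ℝ → ℝ}
  {f : ℝ → ℝ} {l : ℕ}

theorem apply_uMap (hf : SelfRef a b N x v s lam f) (hab : a < b) (hl : l < N)
    (hx : x l < x (l + 1)) (hv : ∀ t, v l (uMap a b x l t) = t) {t : ℝ} (ht : t ∈ Ico a b) :
    f (uMap a b x l t) = s l * f t + lam l t := by
  rw [hf.1 l hl _ (mapsTo_uMap_Ico hab hx ht), hv]

theorem apply_knot (hf : SelfRef a b N x v s lam f) (hab : a < b) (hl : l < N)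
    (hx : x l < x (l + 1)) (hv : ∀ t, v l (uMap a b x l t) = t) :
    f (x l) = s l * f a + lam l a := by
  simpa only [uMap_left] using hf.apply_uMap hab hl hx hv (left_mem_Ico.2 hab)

theorem apply_right_endpoint (hf : SelfRef a b N x v s lam f) (hs : s (N - 1) ≠ 1) :
    f b = lam (N - 1) b / (1 - s (N - 1)) :=
  eq_div_one_sub_of_eq_mul_add hs hf.2

/-- Both sides of `apply_uMap` are continuous on `[a, b]`, so the identity extends from `[a, b)`
to `t = b`, where it evaluates the left limit of `f` at the knot `x (l + 1)`. -/
theorem apply_knot_succ_of_continuousOn (hf : SelfRef a b N x v s lam f) (hab : a < b)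
    (hl : l < N) (hx : x l < x (l + 1)) (hv : ∀ t, v l (uMap a b x l t) = t)
    (hxl : x l ∈ Icc a b) (hxl' : x (l + 1) ∈ Icc a b) (hfc : ContinuousOn f (Icc a b))
    (hlam : ContinuousOn (lam l) (Icc a b)) :
    f (x (l + 1)) = s l * f b + lam l b := by
  have hsub : Icc (x l) (x (l + 1)) ⊆ Icc a b := Icc_subset_Icc hxl.1 hxl'.2
  have hEq : EqOn (f ∘ uMap a b x l) (fun t ↦ s l * f t + lam l t) (Icc a b) :=
    EqOn.of_subset_closure (fun _ ht ↦ hf.apply_uMap hab hl hx hv ht)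
      (hfc.comp (continuous_uMap a b x l).continuousOn ((mapsTo_uMap_Icc hab hx).mono_right hsub))
      ((continuousOn_const.mul hfc).add hlam) Ico_subset_Icc_self (closure_Ico hab.ne).ge
  simpa only [Function.comp_apply, uMap_right hab.ne] using hEq (right_mem_Icc.2 hab.le)

end SelfRef

theorem stmt9_general (a b : ℝ) (hab : a < b) (N : ℕ)
    (x : ℕ → ℝ) (hx0 : x 0 = a) (hxN : x N = b)
    (hxmono : ∀ l < N, x l < x (l + 1))
    (v : ℕ → ℝ → ℝ) (hv : ∀ l < N, ∀ t : ℝ, v l (uMap a b x l t) = t)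
    (s : ℕ → ℝ) (hs : ∀ l < N, |s l| < 1)
    (lam : ℕ → ℝ → ℝ) (hlamc : ∀ l < N, ContinuousOn (lam l) (Set.Icc a b))
    (f : ℝ → ℝ)
    (hf : SelfRef a b N x v s lam f)
    (hfc : ContinuousOn f (Set.Icc a b)) :
    ∀ l : ℕ, l + 1 < N →
      lam l b - lam (l + 1) a =
        s (l + 1) * (lam 0 a / (1 - s 0)) - s l * (lam (N - 1) b / (1 - s (N - 1))) := by
  intro l hl
  have hs_ne : ∀ k < N, s k ≠ 1 := fun k hk ↦ (abs_lt.1 (hs k hk)).2.ne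
  have hknot : ∀ k ≤ N, x k ∈ Icc a b := fun k hk ↦ knot_mem_Icc hx0 hxN hxmono hk
  have hf_a : f a = lam 0 a / (1 - s 0) := by
    refine eq_div_one_sub_of_eq_mul_add (hs_ne 0 (by omega)) ?_
    simpa only [hx0] using hf.apply_knot hab (by omega) (hxmono 0 (by omega)) (hv 0 (by omega))
  have hf_b := hf.apply_right_endpoint (hs_ne (N - 1) (by omega))
  have hright := hf.apply_knot hab hl (hxmono (l + 1) hl) (hv (l + 1) hl)
  have hleft := hf.apply_knot_succ_of_continuousOn hab (by omega) (hxmono l (by omega))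
    (hv l (by omega)) (hknot l (by omega)) (hknot (l + 1) hl.le) hfc (hlamc l (by omega))
  rw [← hf_a, ← hf_b]
  linarith

/-- If the fractal function `f_λ` is continuous on `[a,b]`, then the matching
conditions `λ_l(b) - λ_{l+1}(a) = s_{l+1} λ₀(a)/(1-s₀) - s_l λ_{N-1}(b)/(1-s_{N-1})`
hold for `l = 0, …, N-2`. -/
theorem stmt9 (a b : ℝ) (hab : a < b) (N : ℕ) (hN : 2 ≤ N)
    (x : ℕ → ℝ) (hx0 : x 0 = a) (hxN : x N = b)
    (hxmono : ∀ l < N, x l < x (l + 1))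
    (v : ℕ → ℝ → ℝ) (hv : ∀ l < N, ∀ t : ℝ, v l (uMap a b x l t) = t)
    (s : ℕ → ℝ) (hs : ∀ l < N, |s l| < 1)
    (lam : ℕ → ℝ → ℝ) (hlamc : ∀ l < N, ContinuousOn (lam l) (Set.Icc a b))
    (f : ℝ → ℝ) (hfb : BddOn f (Set.Icc a b))
    (hf : SelfRef a b N x v s lam f)
    (hfc : ContinuousOn f (Set.Icc a b)) :
    ∀ l : ℕ, l + 1 < N →
      lam l b - lam (l + 1) a =
        s (l + 1) * (lam 0 a / (1 - s 0)) - s l * (lam (N - 1) b / (1 - s (N - 1))) :=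
  stmt9_general a b hab N x hx0 hxN hxmono v hv s hs lam hlamc f hf hfc
end

section
/- Conversely, if each λ_l is continuous on [a,b] and the matching conditions λ_l(b) − λ_{l+1}(a) = s_{l+1}·λ_0(a)/(1 − s_0) − s_l·λ_{N-1}(b)/(1 − s_{N-1}) hold for l = 0,…,N−2, then the fractal function f_λ is continuous on [a,b]. -/
/-! On functions continuous on `[a, b]` with boundary values `λ₀(a) / (1 - s₀)` at `a` and
`λ_{N-1}(b) / (1 - s_{N-1})` at `b`, the Read–Bajraktarević operator is given on every closed
piece by its defining formula (the matching conditions make neighbouring pieces agree at the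
nodes), so it preserves this class. It also contracts the sup distance to the bounded fixed
point `f` by the factor `max |s_l| < 1`; hence its iterates converge uniformly to `f`, which is
therefore continuous. -/

open Set Filter

theorem ContinuousOn.of_contracting_approximation {α β : Type*} [TopologicalSpace α]
    [PseudoMetricSpace β] {S : Set α} {f : α → β} (T : (α → β) → α → β)
    (Q : Set (α → β)) (hQT : MapsTo T Q Q) (hQ : ∀ g ∈ Q, ContinuousOn g S)
    {σ : ℝ} (hσ₀ : 0 ≤ σ) (hσ₁ : σ < 1)
    (hT : ∀ g ∈ Q, ∀ M, (∀ y ∈ S, dist (g y) (f y) ≤ M) →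
      ∀ y ∈ S, dist (T g y) (f y) ≤ σ * M)
    {g₀ : α → β} (hg₀ : g₀ ∈ Q) {M₀ : ℝ} (hM₀ : ∀ y ∈ S, dist (g₀ y) (f y) ≤ M₀) :
    ContinuousOn f S := by
  have hQn (n : ℕ) : T^[n] g₀ ∈ Q := hQT.iterate n hg₀
  have hdist (n : ℕ) : ∀ y ∈ S, dist (T^[n] g₀ y) (f y) ≤ σ ^ n * M₀ := by
    induction n with
    | zero => simpa using hM₀
    | succ n ih =>
      rw [Function.iterate_succ_apply', pow_succ', mul_assoc]
      exact hT _ (hQn n) _ ih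
  have hlim : Tendsto (fun n => σ ^ n * M₀) atTop (nhds 0) := by
    simpa using (tendsto_pow_atTop_nhds_zero_of_lt_one hσ₀ hσ₁).mul_const M₀
  have hunif : TendstoUniformlyOn (fun n => T^[n] g₀) f atTop S := by
    refine Metric.tendstoUniformlyOn_iff.2 fun ε hε => ?_
    filter_upwards [hlim.eventually (gt_mem_nhds hε)] with n hn y hy
    rw [dist_comm]
    exact (hdist n y hy).trans_lt hn
  exact hunif.continuousOn (Eventually.of_forall fun n => hQ _ (hQn n)).frequently

theorem exists_mem_Icc_succ_of_mem_Icc {x : ℕ → ℝ} {N : ℕ} (hN : 0 < N) {y : ℝ}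
    (hy : y ∈ Icc (x 0) (x N)) : ∃ l < N, y ∈ Icc (x l) (x (l + 1)) := by
  induction N, hN using Nat.le_induction with
  | base => exact ⟨0, zero_lt_one, hy⟩
  | succ N hN ih =>
    by_cases hyN : y ≤ x N
    · obtain ⟨l, hl, hyl⟩ := ih ⟨hy.1, hyN⟩
      exact ⟨l, by omega, hyl⟩
    · exact ⟨N, N.lt_succ_self, (not_le.1 hyN).le, hy.2⟩

theorem continuousOn_Icc_of_forall_continuousOn_Icc_succ {β : Type*} [TopologicalSpace β]
    {x : ℕ → ℝ} {N : ℕ} (hN : 0 < N) {g : ℝ → β}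
    (hg : ∀ l < N, ContinuousOn g (Icc (x l) (x (l + 1)))) :
    ContinuousOn g (Icc (x 0) (x N)) := by
  have hunion : ContinuousOn g (⋃ l : Fin N, Icc (x l) (x (l + 1))) :=
    (locallyFinite_of_finite _).continuousOn_iUnion (fun _ => isClosed_Icc)
      fun l => hg l l.isLt
  refine hunion.mono fun y hy => ?_
  obtain ⟨l, hl, hyl⟩ := exists_mem_Icc_succ_of_mem_Icc hN hy
  exact mem_iUnion.2 ⟨⟨l, hl⟩, hyl⟩

section AffinePieces

variable {a b : ℝ} {x : ℕ → ℝ} {l : ℕ} {w : ℝ → ℝ}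

theorem uMap_apply_left : uMap a b x l a = x l := by
  simp [uMap]

theorem uMap_apply_right (hab : a < b) : uMap a b x l b = x (l + 1) := by
  have : b - a ≠ 0 := (sub_pos.2 hab).ne'
  simp [uMap, this]

theorem eq_affine_of_leftInverse_uMap (hab : a < b) (hx : x l < x (l + 1))
    (hw : Function.LeftInverse w (uMap a b x l)) :
    w = fun y => a + (b - a) / (x (l + 1) - x l) * (y - x l) := by
  funext y
  have hyu : uMap a b x l (a + (b - a) / (x (l + 1) - x l) * (y - x l)) = y := by
    have h₁ : b - a ≠ 0 := (sub_pos.2 hab).ne'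
    have h₂ : x (l + 1) - x l ≠ 0 := (sub_pos.2 hx).ne'
    simp only [uMap]
    field_simp
    ring
  simpa only [hyu] using hw (a + (b - a) / (x (l + 1) - x l) * (y - x l))

theorem apply_left_of_leftInverse_uMap (hw : Function.LeftInverse w (uMap a b x l)) :
    w (x l) = a := by
  simpa only [uMap_apply_left] using hw a

theorem apply_right_of_leftInverse_uMap (hab : a < b)
    (hw : Function.LeftInverse w (uMap a b x l)) : w (x (l + 1)) = b := by
  simpa only [uMap_apply_right hab] using hw b

theorem continuous_of_leftInverse_uMap (hab : a < b) (hx : x l < x (l + 1))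
    (hw : Function.LeftInverse w (uMap a b x l)) : Continuous w := by
  rw [eq_affine_of_leftInverse_uMap hab hx hw]
  fun_prop

theorem mapsTo_Icc_of_leftInverse_uMap (hab : a < b) (hx : x l < x (l + 1))
    (hw : Function.LeftInverse w (uMap a b x l)) :
    MapsTo w (Icc (x l) (x (l + 1))) (Icc a b) := by
  have hmono : Monotone w := by
    rw [eq_affine_of_leftInverse_uMap hab hx hw]
    have hslope : 0 ≤ (b - a) / (x (l + 1) - x l) := div_nonneg (by linarith) (by linarith)
    intro y z hyz
    dsimp only
    gcongr
  simpa only [apply_left_of_leftInverse_uMap hw, apply_right_of_leftInverse_uMap hab hw] using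
    hmono.mapsTo_Icc (a := x l) (b := x (l + 1))

end AffinePieces

theorem eq_div_one_sub_iff {s c y : ℝ} (hs : s ≠ 1) : y = s * y + c ↔ y = c / (1 - s) := by
  rw [eq_div_iff (sub_ne_zero.2 hs.symm)]
  constructor <;> intro h <;> linarith

/-- `x 0 < ⋯ < x N` partitions `[a, b]` and `v l` inverts the affine map `u_l` onto the `l`-th
piece. -/
structure IsAffinePartition (a b : ℝ) (N : ℕ) (x : ℕ → ℝ) (v : ℕ → ℝ → ℝ) : Prop where
  lt : a < b
  pos : 0 < N
  x_zero : x 0 = a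
  x_last : x N = b
  x_lt_succ : ∀ l < N, x l < x (l + 1)
  leftInverse : ∀ l < N, Function.LeftInverse (v l) (uMap a b x l)

namespace IsAffinePartition

variable {a b : ℝ} {N : ℕ} {x : ℕ → ℝ} {v : ℕ → ℝ → ℝ} {l : ℕ}

theorem v_left (hP : IsAffinePartition a b N x v) (hl : l < N) : v l (x l) = a :=
  apply_left_of_leftInverse_uMap (hP.leftInverse l hl)

theorem v_first (hP : IsAffinePartition a b N x v) : v 0 a = a := by
  simpa only [hP.x_zero] using hP.v_left (l := 0) hP.pos

theorem v_right (hP : IsAffinePartition a b N x v) (hl : l < N) : v l (x (l + 1)) = b :=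
  apply_right_of_leftInverse_uMap hP.lt (hP.leftInverse l hl)

theorem continuous_v (hP : IsAffinePartition a b N x v) (hl : l < N) : Continuous (v l) :=
  continuous_of_leftInverse_uMap hP.lt (hP.x_lt_succ l hl) (hP.leftInverse l hl)

theorem mapsTo_v (hP : IsAffinePartition a b N x v) (hl : l < N) :
    MapsTo (v l) (Icc (x l) (x (l + 1))) (Icc a b) :=
  mapsTo_Icc_of_leftInverse_uMap hP.lt (hP.x_lt_succ l hl) (hP.leftInverse l hl)

theorem x_pred_succ (hP : IsAffinePartition a b N x v) : x (N - 1 + 1) = b := by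
  rw [Nat.sub_add_cancel hP.pos, hP.x_last]

theorem v_pred_last (hP : IsAffinePartition a b N x v) : v (N - 1) b = b := by
  simpa only [hP.x_pred_succ] using hP.v_right (l := N - 1) (by have := hP.pos; omega)

theorem x_pred_le (hP : IsAffinePartition a b N x v) : x (N - 1) ≤ b :=
  hP.x_pred_succ ▸ (hP.x_lt_succ (N - 1) (by have := hP.pos; omega)).le

theorem exists_mem_piece (hP : IsAffinePartition a b N x v) {y : ℝ} (hy : y ∈ Icc a b) :
    ∃ l < N, y ∈ Icc (x l) (x (l + 1)) :=
  exists_mem_Icc_succ_of_mem_Icc hP.pos (hP.x_zero ▸ hP.x_last ▸ hy)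

theorem continuousOn_of_pieces {β : Type*} [TopologicalSpace β] (hP : IsAffinePartition a b N x v)
    {g : ℝ → β} (hg : ∀ l < N, ContinuousOn g (Icc (x l) (x (l + 1)))) :
    ContinuousOn g (Icc a b) :=
  hP.x_zero ▸ hP.x_last ▸ continuousOn_Icc_of_forall_continuousOn_Icc_succ hP.pos hg

end IsAffinePartition

section ReadBajraktarevic

variable {a b : ℝ} {N : ℕ} {x : ℕ → ℝ} {v : ℕ → ℝ → ℝ} {s : ℕ → ℝ} {lam : ℕ → ℝ → ℝ}

open Classical in
/-- The `l < N` with `y ∈ [x l, x (l + 1))`, and `N - 1` for `y ≥ x (N - 1)`. -/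
noncomputable def pieceIdx (N : ℕ) (x : ℕ → ℝ) (y : ℝ) : ℕ :=
  Nat.findGreatest (fun l => x l ≤ y) (N - 1)

/-- The Read–Bajraktarević operator, `g ↦ s_l • g ∘ u_l⁻¹ + λ_l ∘ u_l⁻¹` on the `l`-th piece. -/
noncomputable def rbOp (N : ℕ) (x : ℕ → ℝ) (v : ℕ → ℝ → ℝ) (s : ℕ → ℝ) (lam : ℕ → ℝ → ℝ)
    (g : ℝ → ℝ) (y : ℝ) : ℝ :=
  s (pieceIdx N x y) * g (v (pieceIdx N x y) y) + lam (pieceIdx N x y) (v (pieceIdx N x y) y)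

theorem pieceIdx_eq_of_mem_Ico (hx : ∀ l < N, x l < x (l + 1)) {l : ℕ} (hl : l < N) {y : ℝ}
    (hy : y ∈ Ico (x l) (x (l + 1))) : pieceIdx N x y = l := by
  have hmono : MonotoneOn x (Iic N) :=
    (strictMonoOn_Iic_of_lt_succ fun m hm => by simpa using hx m hm).monotoneOn
  rw [pieceIdx, Nat.findGreatest_eq_iff]
  refine ⟨by omega, fun _ => hy.1, fun k hlk hk hxk => ?_⟩
  have : x (l + 1) ≤ x k := hmono (mem_Iic.2 (by omega)) (mem_Iic.2 (by omega)) hlk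
  linarith [hy.2]

theorem pieceIdx_eq_of_le {y : ℝ} (hy : x (N - 1) ≤ y) : pieceIdx N x y = N - 1 :=
  Nat.findGreatest_eq hy

def IsRBImage (N : ℕ) (x : ℕ → ℝ) (v : ℕ → ℝ → ℝ) (s : ℕ → ℝ) (lam : ℕ → ℝ → ℝ)
    (g h : ℝ → ℝ) : Prop :=
  ∀ l < N, ∀ y ∈ Icc (x l) (x (l + 1)), h y = s l * g (v l y) + lam l (v l y)

/-- At an interior node `x (l + 1)` the two neighbouring pieces prescribe `s (l + 1) * A + lam
(l + 1) a` and `s l * B + lam l b`, which the matching condition makes equal. -/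
theorem isRBImage_of_Ico (hP : IsAffinePartition a b N x v) {A B : ℝ}
    (hmatch : ∀ l, l + 1 < N → lam l b - lam (l + 1) a = s (l + 1) * A - s l * B)
    {g h : ℝ → ℝ} (hga : g a = A) (hgb : g b = B)
    (hIco : ∀ l < N, ∀ y ∈ Ico (x l) (x (l + 1)), h y = s l * g (v l y) + lam l (v l y))
    (hb : h b = s (N - 1) * g b + lam (N - 1) b) :
    IsRBImage N x v s lam g h := by
  intro l hl y hy
  rcases hy.2.lt_or_eq with hlt | rfl
  · exact hIco l hl y ⟨hy.1, hlt⟩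
  rw [hP.v_right hl, hgb]
  rcases Nat.lt_or_ge (l + 1) N with hl' | hl'
  · have hnode := hIco (l + 1) hl' (x (l + 1)) ⟨le_rfl, hP.x_lt_succ (l + 1) hl'⟩
    rw [hP.v_left hl', hga] at hnode
    linarith [hmatch l hl']
  · obtain rfl : l = N - 1 := by omega
    rwa [hP.x_pred_succ, ← hgb]

theorem isRBImage_rbOp (hP : IsAffinePartition a b N x v) {A B : ℝ}
    (hmatch : ∀ l, l + 1 < N → lam l b - lam (l + 1) a = s (l + 1) * A - s l * B)
    {g : ℝ → ℝ} (hga : g a = A) (hgb : g b = B) :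
    IsRBImage N x v s lam g (rbOp N x v s lam g) :=
  isRBImage_of_Ico hP hmatch hga hgb
    (fun l hl y hy => by rw [rbOp, pieceIdx_eq_of_mem_Ico hP.x_lt_succ hl hy])
    (by rw [rbOp, pieceIdx_eq_of_le hP.x_pred_le, hP.v_pred_last])

namespace IsRBImage

variable {g h : ℝ → ℝ}

theorem apply_left (hgh : IsRBImage N x v s lam g h) (hP : IsAffinePartition a b N x v) :
    h a = s 0 * g a + lam 0 a := by
  have ha : a ∈ Icc (x 0) (x (0 + 1)) := hP.x_zero ▸ ⟨le_rfl, (hP.x_lt_succ 0 hP.pos).le⟩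
  rw [hgh 0 hP.pos a ha, hP.v_first]

theorem apply_right (hgh : IsRBImage N x v s lam g h) (hP : IsAffinePartition a b N x v) :
    h b = s (N - 1) * g b + lam (N - 1) b := by
  have hb : b ∈ Icc (x (N - 1)) (x (N - 1 + 1)) := by
    rw [hP.x_pred_succ]
    exact ⟨hP.x_pred_le, le_rfl⟩
  rw [hgh (N - 1) (by have := hP.pos; omega) b hb, hP.v_pred_last]

theorem continuousOn (hgh : IsRBImage N x v s lam g h) (hP : IsAffinePartition a b N x v)
    (hlam : ∀ l < N, ContinuousOn (lam l) (Icc a b)) (hg : ContinuousOn g (Icc a b)) :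
    ContinuousOn h (Icc a b) := by
  refine hP.continuousOn_of_pieces fun l hl => ?_
  have hvl := (hP.continuous_v hl).continuousOn (s := Icc (x l) (x (l + 1)))
  refine ContinuousOn.congr ?_ (hgh l hl)
  exact continuousOn_const.mul (hg.comp hvl (hP.mapsTo_v hl)) |>.add
    ((hlam l hl).comp hvl (hP.mapsTo_v hl))

theorem dist_le {g' h' : ℝ → ℝ} (hgh : IsRBImage N x v s lam g h)
    (hgh' : IsRBImage N x v s lam g' h') (hP : IsAffinePartition a b N x v) {σ M : ℝ}
    (hs : ∀ l < N, |s l| ≤ σ) (hM : ∀ y ∈ Icc a b, dist (g y) (g' y) ≤ M) :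
    ∀ y ∈ Icc a b, dist (h y) (h' y) ≤ σ * M := by
  intro y hy
  obtain ⟨l, hl, hyl⟩ := hP.exists_mem_piece hy
  rw [hgh l hl y hyl, hgh' l hl y hyl, dist_add_right, Real.dist_eq, ← mul_sub, abs_mul,
    ← Real.dist_eq]
  exact mul_le_mul (hs l hl) (hM _ (hP.mapsTo_v hl hyl)) dist_nonneg
    ((abs_nonneg _).trans (hs l hl))

end IsRBImage

def ContinuousWithEndpoints (a b A B : ℝ) : Set (ℝ → ℝ) :=
  {g | ContinuousOn g (Icc a b) ∧ g a = A ∧ g b = B}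

theorem mapsTo_rbOp (hP : IsAffinePartition a b N x v)
    (hlam : ∀ l < N, ContinuousOn (lam l) (Icc a b)) {A B : ℝ}
    (hmatch : ∀ l, l + 1 < N → lam l b - lam (l + 1) a = s (l + 1) * A - s l * B)
    (hA : A = s 0 * A + lam 0 a) (hB : B = s (N - 1) * B + lam (N - 1) b) :
    MapsTo (rbOp N x v s lam) (ContinuousWithEndpoints a b A B)
      (ContinuousWithEndpoints a b A B) := by
  rintro g ⟨hgc, hga, hgb⟩
  have hT := isRBImage_rbOp hP hmatch hga hgb
  exact ⟨hT.continuousOn hP hlam hgc, by rw [hT.apply_left hP, hga, ← hA],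
    by rw [hT.apply_right hP, hgb, ← hB]⟩

end ReadBajraktarevic

theorem exists_mem_continuousWithEndpoints {a b : ℝ} (hab : a < b) (A B : ℝ) :
    ∃ g, g ∈ ContinuousWithEndpoints a b A B := by
  refine ⟨fun t => A + (B - A) / (b - a) * (t - a), by fun_prop, by simp, ?_⟩
  have : b - a ≠ 0 := (sub_pos.2 hab).ne'
  field_simp
  ring

theorem BddOn.exists_dist_le {S : Set ℝ} {f g : ℝ → ℝ} (hf : BddOn f S) (hS : IsCompact S)
    (hg : ContinuousOn g S) : ∃ M, ∀ y ∈ S, dist (g y) (f y) ≤ M := by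
  obtain ⟨C₀, hC₀⟩ := hf
  obtain ⟨C₁, hC₁⟩ := hS.exists_bound_of_continuousOn hg
  exact ⟨C₁ + C₀, fun y hy =>
    (dist_le_norm_add_norm _ _).trans (add_le_add (hC₁ y hy) (hC₀ y hy))⟩

theorem exists_forall_abs_le_lt_one {s : ℕ → ℝ} {N : ℕ} (hN : 0 < N)
    (hs : ∀ l < N, |s l| < 1) : ∃ σ, 0 ≤ σ ∧ σ < 1 ∧ ∀ l < N, |s l| ≤ σ := by
  obtain ⟨m, hm, hmax⟩ :=
    (Finset.range N).exists_max_image (fun l => |s l|) ⟨0, Finset.mem_range.2 hN⟩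
  exact ⟨|s m|, abs_nonneg _, hs m (Finset.mem_range.1 hm),
    fun l hl => hmax l (Finset.mem_range.2 hl)⟩

/-- Conversely, if each `λ_l` is continuous on `[a,b]` and the matching conditions
hold for `l = 0, …, N-2`, then the fractal function `f_λ` is continuous on `[a,b]`. -/
theorem stmt10 (a b : ℝ) (hab : a < b) (N : ℕ) (hN : 2 ≤ N)
    (x : ℕ → ℝ) (hx0 : x 0 = a) (hxN : x N = b)
    (hxmono : ∀ l < N, x l < x (l + 1))
    (v : ℕ → ℝ → ℝ) (hv : ∀ l < N, ∀ t : ℝ, v l (uMap a b x l t) = t)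
    (s : ℕ → ℝ) (hs : ∀ l < N, |s l| < 1)
    (lam : ℕ → ℝ → ℝ) (hlamc : ∀ l < N, ContinuousOn (lam l) (Set.Icc a b))
    (hmatch : ∀ l : ℕ, l + 1 < N →
      lam l b - lam (l + 1) a =
        s (l + 1) * (lam 0 a / (1 - s 0)) - s l * (lam (N - 1) b / (1 - s (N - 1))))
    (f : ℝ → ℝ) (hfb : BddOn f (Set.Icc a b))
    (hf : SelfRef a b N x v s lam f) :
    ContinuousOn f (Set.Icc a b) := by
  have hP : IsAffinePartition a b N x v := ⟨hab, by omega, hx0, hxN, hxmono, hv⟩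
  have hs1 : ∀ l < N, s l ≠ 1 := fun l hl h => by simpa [h] using hs l hl
  have hs0 := hs1 0 hP.pos
  have hsN := hs1 (N - 1) (by omega)
  obtain ⟨hfPieces, hfEnd⟩ := hf
  have hff : IsRBImage N x v s lam f f := by
    refine isRBImage_of_Ico hP hmatch ((eq_div_one_sub_iff hs0).1 ?_)
      ((eq_div_one_sub_iff hsN).1 hfEnd) hfPieces hfEnd
    simpa only [hx0, hP.v_first] using hfPieces 0 hP.pos (x 0) ⟨le_rfl, hxmono 0 hP.pos⟩
  obtain ⟨σ, hσ0, hσ1, hsσ⟩ := exists_forall_abs_le_lt_one hP.pos hs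
  obtain ⟨g₀, hg₀⟩ := exists_mem_continuousWithEndpoints hab
    (lam 0 a / (1 - s 0)) (lam (N - 1) b / (1 - s (N - 1)))
  obtain ⟨M₀, hM₀⟩ := hfb.exists_dist_le isCompact_Icc hg₀.1
  exact ContinuousOn.of_contracting_approximation (rbOp N x v s lam) _
    (mapsTo_rbOp hP hlamc hmatch ((eq_div_one_sub_iff hs0).2 rfl)
      ((eq_div_one_sub_iff hsN).2 rfl)) (fun _ hg => hg.1) hσ0 hσ1
    (fun g hg M hM => (isRBImage_rbOp hP hmatch hg.2.1 hg.2.2).dist_le hff hP hsσ hM) hg₀ hM₀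
end
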